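/- Let q ≥ 2 be a prime power and n ≥ 2. For all integers i, j, k with 1 ≤ i ≤ n−1, 1 ≤ j ≤ n−1 and 1 ≤ k ≤ n−1, the congruence q^i + q^{j+k} ≡ q^k + 1 (mod q^n − 1) holds if and only if i = k and j + k = n. -/

import Mathlib

/-!
Reducing `q^(j+k)` to `q^t` with `t = (j + k) % n`, both sides of the congruence become sums of
two powers of `q` with exponents below `n`, hence lie in `[2, q^n]`, an interval of length
`q^n - 1`; so the congruence is an equality `q^i + q^t = q^k + 1`. Reading it modulo `q` forces
`t = 0`, i.e. `j + k = n`, and then `q^i = q^k`.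
-/

namespace Nat

theorem ModEq.eq_of_le_of_lt_add {m c a b : ℕ} (h : a ≡ b [MOD m]) (ha : c ≤ a)
    (ha' : a < c + m) (hb : c ≤ b) (hb' : b < c + m) : a = b :=
  h.eq_of_abs_lt <| abs_sub_lt_iff.2 ⟨by omega, by omega⟩

theorem pow_modEq_pow_mod {q : ℕ} (hq : 0 < q) (a n : ℕ) : q ^ a ≡ q ^ (a % n) [MOD q ^ n - 1] :=
  calc q ^ a = (q ^ n) ^ (a / n) * q ^ (a % n) := by rw [← pow_mul, ← pow_add, Nat.div_add_mod]
    _ ≡ 1 ^ (a / n) * q ^ (a % n) [MOD q ^ n - 1] :=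
      ((modEq_sub (one_le_pow n q hq)).pow _).mul_right _
    _ = q ^ (a % n) := by rw [one_pow, one_mul]

theorem pow_add_pow_le_pow {q a b n : ℕ} (hq : 2 ≤ q) (ha : a < n) (hb : b < n) :
    q ^ a + q ^ b ≤ q ^ n :=
  calc q ^ a + q ^ b ≤ q ^ (n - 1) * 2 := by
        have hq0 : 0 < q := by omega
        linarith [Nat.pow_le_pow_right hq0 (Nat.le_sub_one_of_lt ha),
          Nat.pow_le_pow_right hq0 (Nat.le_sub_one_of_lt hb)]
    _ ≤ q ^ (n - 1) * q := Nat.mul_le_mul_left _ hq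
    _ = q ^ n := by rw [← pow_succ, Nat.sub_add_cancel (by omega)]

theorem pow_add_pow_ne_pow_add_one {q a b c : ℕ} (hq : q ≠ 1) (ha : a ≠ 0) (hb : b ≠ 0)
    (hc : c ≠ 0) : q ^ a + q ^ b ≠ q ^ c + 1 := by
  intro h
  have hdvd : q ∣ q ^ c + 1 := h ▸ dvd_add (dvd_pow_self q ha) (dvd_pow_self q hb)
  exact hq (Nat.dvd_one.1 ((Nat.dvd_add_right (dvd_pow_self q hc)).1 hdvd))

theorem mod_eq_zero_iff_eq_of_lt_two_mul {a n : ℕ} (h0 : 0 < a) (h : a < 2 * n) :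
    a % n = 0 ↔ a = n := by
  rcases lt_or_ge a n with han | han
  · rw [Nat.mod_eq_of_lt han]; omega
  · rw [Nat.mod_eq_sub_mod han, Nat.mod_eq_of_lt (by omega)]; omega

end Nat

theorem stmt_17_general (q : ℕ) (hq2 : 2 ≤ q)
    (n : ℕ) (i j k : ℕ)
    (hi1 : 1 ≤ i) (hi2 : i ≤ n - 1) (hj2 : j ≤ n - 1)
    (hk1 : 1 ≤ k) (hk2 : k ≤ n - 1) :
    q ^ i + q ^ (j + k) ≡ q ^ k + 1 [MOD q ^ n - 1] ↔ (i = k ∧ j + k = n) := by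
  set t := (j + k) % n
  have hn0 : 0 < n := by omega
  have hreduce : q ^ i + q ^ (j + k) ≡ q ^ i + q ^ t [MOD q ^ n - 1] :=
    (Nat.pow_modEq_pow_mod (by omega) _ _).add_left _
  have hpos : ∀ e, 1 ≤ q ^ e := fun e => Nat.one_le_pow e q (by omega)
  have hlhs : q ^ i + q ^ t ≤ q ^ n :=
    Nat.pow_add_pow_le_pow hq2 (by omega) (Nat.mod_lt (j + k) hn0)
  have hrhs : q ^ k + 1 ≤ q ^ n := Nat.pow_add_pow_le_pow hq2 (by omega) hn0
  have hqn := hpos n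
  have hcongr_iff : q ^ i + q ^ (j + k) ≡ q ^ k + 1 [MOD q ^ n - 1] ↔
      q ^ i + q ^ t = q ^ k + 1 :=
    ⟨fun h => (hreduce.symm.trans h).eq_of_le_of_lt_add (c := 2) (by linarith [hpos i, hpos t])
        (by omega) (by linarith [hpos k]) (by omega),
      fun h => h ▸ hreduce⟩
  have ht_iff : t = 0 ↔ j + k = n := Nat.mod_eq_zero_iff_eq_of_lt_two_mul (by omega) (by omega)
  rw [hcongr_iff, ← ht_iff]
  constructor
  · intro h
    have ht0 : t = 0 := by
      by_contra ht0
      exact Nat.pow_add_pow_ne_pow_add_one (by omega) (by omega) ht0 (by omega) h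
    rw [ht0, pow_zero, add_left_inj] at h
    exact ⟨Nat.pow_right_injective hq2 h, ht0⟩
  · rintro ⟨rfl, ht0⟩
    rw [ht0, pow_zero]

/-- for a prime power `q ≥ 2`, `n ≥ 2` and `1 ≤ i, j, k ≤ n-1`, one has
`q^i + q^{j+k} ≡ q^k + 1 (mod q^n - 1)` if and only if `i = k` and `j + k = n`. -/
theorem stmt_17 (q : ℕ) (hq2 : 2 ≤ q) (hqpp : ∃ p m : ℕ, p.Prime ∧ 0 < m ∧ q = p ^ m)
    (n : ℕ) (hn : 2 ≤ n) (i j k : ℕ)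
    (hi1 : 1 ≤ i) (hi2 : i ≤ n - 1) (hj1 : 1 ≤ j) (hj2 : j ≤ n - 1)
    (hk1 : 1 ≤ k) (hk2 : k ≤ n - 1) :
    q ^ i + q ^ (j + k) ≡ q ^ k + 1 [MOD q ^ n - 1] ↔ (i = k ∧ j + k = n) :=
  stmt_17_general q hq2 n i j k hi1 hi2 hj2 hk1 hk2
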